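/- arXiv:1405.4492 — 3 statements merged into one kernel-verified Lean document; each statement's English description precedes it below -/
import Mathlib

section
/- Let z ∈ ℝ, let j ≥ 0 be an integer, and let f, φ : ℝ → ℝ be C^∞ on a neighborhood of z with f(z) = 0 and f'(z) ≠ 0. Assume φ^(i)(z) = f^(i+1)(z)/(i+1) for every i = 0, 1, …, j, and define t(x) = x − f(x)/φ(x). Then there exists ε > 0 such that for every initial point x₀ with |x₀ − z| < ε, the sequence of iterates x_{k+1} = t(x_k) (i.e., k ↦ t^[k](x₀)) converges to z. -/
open Filter

/-- If `φ` satisfies the model-function conditions of order `j` for `f` at a simple zero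
`z` of `f`, then the iteration `x_{k+1} = t(x_k)` with `t(x) = x - f(x)/φ(x)` converges
to `z` for every initial point sufficiently close to `z`. -/
theorem model_function_local_convergence (z : ℝ) (j : ℕ) (f φ : ℝ → ℝ)
    (hf : ContDiffAt ℝ (⊤ : ℕ∞) f z) (hφ : ContDiffAt ℝ (⊤ : ℕ∞) φ z)
    (hfz : f z = 0) (hf'z : deriv f z ≠ 0)
    (hmodel : ∀ i : ℕ, i ≤ j → iteratedDeriv i φ z = iteratedDeriv (i + 1) f z / (i + 1 : ℝ)) :
    ∃ ε > 0, ∀ x₀ : ℝ, |x₀ - z| < ε →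
      Tendsto (fun k : ℕ => (fun x => x - f x / φ x)^[k] x₀) atTop (nhds z) := by
  set t : ℝ → ℝ := fun x => x - f x / φ x with htdef
  have hφz : φ z = deriv f z := by
    have h := hmodel 0 (Nat.zero_le j)
    simpa [iteratedDeriv_succ, iteratedDeriv_zero] using h
  have hφz0 : φ z ≠ 0 := hφz ▸ hf'z
  have htz : t z = z := by simp [htdef, hfz]
  have htc : ContDiffAt ℝ (⊤ : ℕ∞) t z := contDiffAt_id.sub (hf.div hφ hφz0)
  have hfd : DifferentiableAt ℝ f z := hf.differentiableAt (by simp)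
  have hφd : DifferentiableAt ℝ φ z := hφ.differentiableAt (by simp)
  have hdz : deriv t z = 0 := by
    have h1 : deriv t z = 1 - (deriv f z * φ z - f z * deriv φ z) / φ z ^ 2 := by
      rw [htdef]
      rw [deriv_fun_sub (f := fun x : ℝ => x) differentiableAt_id (hfd.fun_div hφd hφz0), deriv_id'',
        deriv_fun_div hfd hφd hφz0]
    rw [h1, hfz, hφz]
    field_simp
    ring
  -- Extract an open neighborhood where `t` is C^1.
  obtain ⟨u, hu_open, hz_u, hu⟩ := htc.contDiffOn' (m := 1) (by simp) (by simp)
  rw [Set.insert_eq_self.mpr (Set.mem_univ z), Set.univ_inter] at hu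
  have hcont : ContinuousOn (deriv t) u := hu.continuousOn_deriv_of_isOpen hu_open le_rfl
  -- The set where `|deriv t| < 1/2`, intersected with `u`, is a neighborhood of `z`.
  have hca : ContinuousAt (deriv t) z := hcont.continuousAt (hu_open.mem_nhds hz_u)
  have habs : ∀ᶠ x in nhds z, |deriv t x| < 1/2 := by
    have h0 : |deriv t z| < 1/2 := by rw [hdz]; norm_num
    exact (hca.abs.eventually_lt continuousAt_const h0)
  have hmem : {x | |deriv t x| < 1/2} ∩ u ∈ nhds z :=
    Filter.inter_mem habs (hu_open.mem_nhds hz_u)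
  obtain ⟨ε, hε, hball⟩ := Metric.mem_nhds_iff.mp hmem
  refine ⟨ε, hε, fun x₀ hx₀ => ?_⟩
  -- Contraction property of `t` on the ball.
  have hkey : ∀ x ∈ Metric.ball z ε, |t x - z| ≤ 1/2 * |x - z| := by
    intro x hx
    have hdiff : ∀ y ∈ Metric.ball z ε, DifferentiableAt ℝ t y := fun y hy =>
      (hu.differentiableOn one_ne_zero).differentiableAt
        (hu_open.mem_nhds (hball hy).2)
    have hbound : ∀ y ∈ Metric.ball z ε, ‖deriv t y‖ ≤ 1/2 := fun y hy =>
      le_of_lt (hball hy).1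
    have hzball : z ∈ Metric.ball z ε := Metric.mem_ball_self hε
    have := (convex_ball z ε).norm_image_sub_le_of_norm_deriv_le hdiff hbound hzball hx
    simpa [htz, Real.norm_eq_abs] using this
  -- Inductive bound.
  have hb : ∀ k : ℕ, |t^[k] x₀ - z| ≤ (1/2 : ℝ)^k * |x₀ - z| := by
    intro k
    induction k with
    | zero => simp
    | succ k ih =>
      have hlt : |t^[k] x₀ - z| < ε := by
        calc |t^[k] x₀ - z| ≤ (1/2:ℝ)^k * |x₀ - z| := ih
          _ ≤ 1 * |x₀ - z| := by
              apply mul_le_mul_of_nonneg_right _ (abs_nonneg _)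
              exact pow_le_one₀ (by norm_num) (by norm_num)
          _ = |x₀ - z| := one_mul _
          _ < ε := hx₀
      have hball' : t^[k] x₀ ∈ Metric.ball z ε := by
        rwa [Metric.mem_ball, Real.dist_eq]
      calc |t^[k+1] x₀ - z| = |t (t^[k] x₀) - z| := by rw [Function.iterate_succ_apply']
        _ ≤ 1/2 * |t^[k] x₀ - z| := hkey _ hball'
        _ ≤ 1/2 * ((1/2:ℝ)^k * |x₀ - z|) := by linarith
        _ = (1/2:ℝ)^(k+1) * |x₀ - z| := by ring
  -- Conclude by squeezing.
  rw [tendsto_iff_dist_tendsto_zero]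
  have hg : Tendsto (fun k : ℕ => (1/2:ℝ)^k * |x₀ - z|) atTop (nhds 0) := by
    have h := (tendsto_pow_atTop_nhds_zero_of_lt_one (by norm_num : (0:ℝ) ≤ 1/2)
      (by norm_num)).mul_const |x₀ - z|
    simpa only [zero_mul] using h
  exact squeeze_zero (fun k => dist_nonneg) (fun k => by rw [Real.dist_eq]; exact hb k) hg
end

section
/- Let z ∈ ℝ, let k ≥ 1 be an integer, let f : ℝ → ℝ be C^∞ on a neighborhood of z, and let h be a step function of order k at z. Define the Taylor-type function φ_k(x) = ∑_{i=0}^{k} (f^(i+1)(x)/(i+1)!) · (h(x))^i. Then φ_k satisfies the model-function conditions of order k for f at z: the i-th derivative φ_k^(i)(z) = f^(i+1)(z)/(i+1) for every i = 0, 1, …, k. -/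
open Finset Filter Metric

lemma my_extend {f : ℝ → ℝ} {x : ℝ} (hf : ContDiffAt ℝ (⊤ : ℕ∞) f x) (N : ℕ) :
    ∃ g : ℝ → ℝ, ContDiff ℝ (N : WithTop ℕ∞) g ∧ f =ᶠ[nhds x] g := by
  obtain ⟨u, hu, hfu'⟩ := hf.contDiffOn (m := (N : WithTop ℕ∞))
    (WithTop.coe_le_coe.2 le_top) (by simp)
  have hfu : ContDiffOn ℝ (N : WithTop ℕ∞) f u := hfu'
  obtain ⟨r, hr, hball⟩ := Metric.mem_nhds_iff.mp hu
  set φ : ContDiffBump x := ⟨r/3, r/2, by positivity, by linarith⟩ with hφ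
  refine ⟨fun y => φ y * f y, ?_, ?_⟩
  · rw [contDiff_iff_contDiffAt]
    intro y
    by_cases hy : y ∈ Metric.ball x r
    · exact (φ.contDiff.contDiffAt).mul ((hfu y (hball hy)).contDiffAt
        (Filter.mem_of_superset (Metric.isOpen_ball.mem_nhds hy) hball))
    · have hyt : y ∉ tsupport φ := by
        intro hmem
        rw [φ.tsupport_eq] at hmem
        have h2 : y ∈ Metric.closedBall x (r/2) := hmem
        exact hy (Metric.closedBall_subset_ball (by linarith) h2)
      have : (fun y => (φ y : ℝ) * f y) =ᶠ[nhds y] (fun _ => (0:ℝ)) := by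
        filter_upwards [(isOpen_compl_iff.mpr (isClosed_tsupport φ)).mem_nhds hyt] with w hw
        simp [image_eq_zero_of_notMem_tsupport hw]
      exact (contDiffAt_const (c := (0:ℝ))).congr_of_eventuallyEq this
  · filter_upwards [φ.eventuallyEq_one] with w hw
    simp [hw]
open Finset Filter

local notation "∞" => (⊤ : ℕ∞)

lemma my_of_le {f : ℝ → ℝ} {a b : ℕ} (hf : ContDiff ℝ (b : WithTop ℕ∞) f) (h : a ≤ b) :
    ContDiff ℝ (a : WithTop ℕ∞) f :=
  hf.of_le (by exact_mod_cast h)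

lemma my_smooth_iter {f : ℝ → ℝ} {N : ℕ} (n : ℕ) (hf : ContDiff ℝ ((N + n : ℕ) : WithTop ℕ∞) f) :
    ContDiff ℝ (N : WithTop ℕ∞) (iteratedDeriv n f) := by
  rw [iteratedDeriv_eq_iterate]; exact hf.iterate_deriv' N n

lemma my_hasDerivAt {f : ℝ → ℝ} {n : ℕ} (hf : ContDiff ℝ ((n + 1 : ℕ) : WithTop ℕ∞) f) (x : ℝ) :
    HasDerivAt (iteratedDeriv n f) (iteratedDeriv (n + 1) f x) x := by
  have hd := hf.differentiable_iteratedDeriv n (by exact_mod_cast Nat.lt_succ_self n)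
  rw [iteratedDeriv_succ]
  exact (hd x).hasDerivAt

lemma my_const (n : ℕ) (c x : ℝ) :
    iteratedDeriv n (fun _ : ℝ => c) x = if n = 0 then c else 0 := by
  induction n generalizing c x with
  | zero => simp
  | succ n ih =>
    rw [iteratedDeriv_succ']
    have : deriv (fun _ : ℝ => c) = fun _ : ℝ => (0:ℝ) := by
      funext y; exact deriv_const y c
    rw [this, ih]
    simp

lemma my_add {f g : ℝ → ℝ} {n : ℕ} (hf : ContDiff ℝ (n : WithTop ℕ∞) f)
    (hg : ContDiff ℝ (n : WithTop ℕ∞) g) (x : ℝ) :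
    iteratedDeriv n (fun y => f y + g y) x = iteratedDeriv n f x + iteratedDeriv n g x := by
  simp only [← iteratedDerivWithin_univ]
  exact iteratedDerivWithin_add (Set.mem_univ x) uniqueDiffOn_univ
    hf.contDiffWithinAt
    hg.contDiffWithinAt

lemma my_const_mul {f : ℝ → ℝ} {n : ℕ} (hf : ContDiff ℝ (n : WithTop ℕ∞) f) (c : ℝ) (x : ℝ) :
    iteratedDeriv n (fun y => c * f y) x = c * iteratedDeriv n f x := by
  simp only [← iteratedDerivWithin_univ]
  exact iteratedDerivWithin_const_mul (Set.mem_univ x) uniqueDiffOn_univ c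
    hf.contDiffWithinAt

lemma my_sum {ι : Type*} (s : Finset ι) (F : ι → ℝ → ℝ) {n : ℕ}
    (hF : ∀ i ∈ s, ContDiff ℝ (n : WithTop ℕ∞) (F i)) (x : ℝ) :
    iteratedDeriv n (fun y => ∑ i ∈ s, F i y) x = ∑ i ∈ s, iteratedDeriv n (F i) x := by
  classical
  induction s using Finset.induction_on with
  | empty => simp [my_const n 0 x]
  | insert a t hnot ih =>
    have h1 : ContDiff ℝ (n : WithTop ℕ∞) (F a) := hF a (Finset.mem_insert_self a t)
    have h2 : ContDiff ℝ (n : WithTop ℕ∞) (fun y => ∑ i ∈ t, F i y) :=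
      ContDiff.sum fun i hi => hF i (Finset.mem_insert_of_mem hi)
    simp only [Finset.sum_insert hnot]
    rw [my_add h1 h2, ih fun i hi => hF i (Finset.mem_insert_of_mem hi)]


lemma my_pascal (a b : ℕ → ℝ) (n : ℕ) :
    ∑ j ∈ range (n + 1), (n.choose j : ℝ) * (a (j + 1) * b (n - j) + a j * b (n - j + 1))
      = ∑ j ∈ range (n + 2), ((n + 1).choose j : ℝ) * (a j * b (n + 1 - j)) := by
  set A : ℕ → ℝ := fun j => (n.choose j : ℝ) * (a (j + 1) * b (n - j)) with hA
  set G : ℕ → ℝ := fun j => (n.choose j : ℝ) * (a j * b (n + 1 - j)) with hG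
  set F : ℕ → ℝ := fun j => ((n + 1).choose j : ℝ) * (a j * b (n + 1 - j)) with hF
  have step2 : ∀ j, F (j + 1) = A j + G (j + 1) := by
    intro j
    rw [hA, hF, hG]
    simp only []
    rw [Nat.choose_succ_succ, Nat.succ_sub_succ]
    push_cast
    ring
  have stepF0 : F 0 = G 0 := by rw [hF, hG]; simp
  have step4 : G (n + 1) = 0 := by rw [hG]; simp [Nat.choose_succ_self]
  calc ∑ j ∈ range (n + 1), (n.choose j : ℝ) * (a (j + 1) * b (n - j) + a j * b (n - j + 1))
      = ∑ j ∈ range (n + 1), (A j + G j) := by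
        refine Finset.sum_congr rfl fun j hj => ?_
        have hjn : j ≤ n := by have := Finset.mem_range.mp hj; omega
        rw [hA, hG]
        simp only []
        rw [show n - j + 1 = n + 1 - j by omega]
        ring
    _ = ∑ j ∈ range (n + 1), A j + ∑ j ∈ range (n + 1), G j := Finset.sum_add_distrib
    _ = ∑ j ∈ range (n + 1), A j + ∑ j ∈ range (n + 2), G j := by
        rw [Finset.sum_range_succ G (n + 1), step4, add_zero]
    _ = ∑ j ∈ range (n + 1), A j + (∑ j ∈ range (n + 1), G (j + 1) + G 0) := by
        rw [Finset.sum_range_succ' G (n + 1)]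
    _ = ∑ j ∈ range (n + 1), (A j + G (j + 1)) + F 0 := by
        rw [stepF0, Finset.sum_add_distrib]; ring
    _ = ∑ j ∈ range (n + 1), F (j + 1) + F 0 := by
        rw [Finset.sum_congr rfl fun j _ => (step2 j).symm]
    _ = ∑ j ∈ range (n + 2), F j := (Finset.sum_range_succ' F (n + 1)).symm

lemma my_leibniz {f g : ℝ → ℝ} {n : ℕ} (hf : ContDiff ℝ (n : WithTop ℕ∞) f)
    (hg : ContDiff ℝ (n : WithTop ℕ∞) g) (x : ℝ) :
    iteratedDeriv n (fun y => f y * g y) x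
      = ∑ j ∈ range (n + 1),
          (n.choose j : ℝ) * (iteratedDeriv j f x * iteratedDeriv (n - j) g x) := by
  induction n generalizing x with
  | zero => simp
  | succ n ih =>
    rw [iteratedDeriv_succ]
    have hfun : iteratedDeriv n (fun y => f y * g y)
        = fun y => ∑ j ∈ range (n + 1),
            (n.choose j : ℝ) * (iteratedDeriv j f y * iteratedDeriv (n - j) g y) :=
      funext fun y => ih (my_of_le (b := n + 1) hf (by omega)) (my_of_le (b := n + 1) hg (by omega)) y
    rw [hfun]
    have hsum : HasDerivAt (fun y => ∑ j ∈ range (n + 1),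
          (n.choose j : ℝ) * (iteratedDeriv j f y * iteratedDeriv (n - j) g y))
        (∑ j ∈ range (n + 1), (n.choose j : ℝ) *
          (iteratedDeriv (j + 1) f x * iteratedDeriv (n - j) g x
            + iteratedDeriv j f x * iteratedDeriv (n - j + 1) g x)) x := by
      apply HasDerivAt.fun_sum
      intro j hj
      have hjn := Finset.mem_range.mp hj
      exact ((my_hasDerivAt (n := j) (my_of_le hf (by omega)) x).mul
        (my_hasDerivAt (n := n - j) (my_of_le hg (by omega)) x)).const_mul _
    rw [hsum.deriv]
    exact my_pascal (fun j => iteratedDeriv j f x) (fun j => iteratedDeriv j g x) n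

lemma my_pow {h : ℝ → ℝ} {z : ℝ} (k : ℕ) (hh : ContDiff ℝ (k : WithTop ℕ∞) h)
    (h0 : h z = 0) (h1 : deriv h z = -1)
    (hhi : ∀ i : ℕ, 2 ≤ i → i ≤ k → iteratedDeriv i h z = 0) :
    ∀ m : ℕ, ∀ j ≤ k, iteratedDeriv j (fun x => h x ^ m) z
      = if j = m then (-1 : ℝ) ^ m * (Nat.factorial m : ℝ) else 0 := by
  intro m
  induction m with
  | zero =>
    intro j hj
    simp only [pow_zero]
    rw [my_const]
    simp [Nat.factorial]
  | succ m ih =>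
    intro j hj
    have hfun : (fun x => h x ^ (m + 1)) = fun x => h x * h x ^ m :=
      funext fun x => by ring
    rw [hfun, my_leibniz (my_of_le hh hj) ((my_of_le hh hj).pow m)]
    rcases Nat.eq_zero_or_pos j with hj0 | hj1
    · subst hj0
      simp [h0]
    · rw [Finset.sum_eq_single 1]
      · rw [iteratedDeriv_one, h1, Nat.choose_one_right, ih (j - 1) (by omega)]
        by_cases hjm : j = m + 1
        · rw [if_pos (by omega), if_pos hjm]
          subst hjm
          push_cast [Nat.factorial_succ]
          ring
        · rw [if_neg (by omega), if_neg hjm]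
          ring
      · intro r hr hr1
        rcases Nat.eq_zero_or_pos r with h00 | hrpos
        · subst h00
          simp [h0]
        · have hr2 : 2 ≤ r := by omega
          have hrk : r ≤ k := by
            have := Finset.mem_range.mp hr; omega
          rw [hhi r hr2 hrk]
          ring
      · intro hnot
        exact absurd (Finset.mem_range.mpr (by omega)) hnot

lemma my_comp (f : ℝ → ℝ) (j m : ℕ) :
    iteratedDeriv j (iteratedDeriv m f) = iteratedDeriv (j + m) f := by
  rw [iteratedDeriv_eq_iterate, iteratedDeriv_eq_iterate, iteratedDeriv_eq_iterate,
    Function.iterate_add_apply]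

lemma my_altsum (i : ℕ) :
    ∑ m ∈ range (i + 1), (-1 : ℝ) ^ m * (i.choose m : ℝ) / (m + 1) = 1 / (i + 1) := by
  have key : ∑ m ∈ range (i + 1), (-1 : ℤ) ^ m * ((i + 1).choose (m + 1) : ℤ) = 1 := by
    have h := Int.alternating_sum_range_choose (n := i + 1)
    rw [if_neg (by omega)] at h
    rw [Finset.sum_range_succ' (fun j => (-1 : ℤ) ^ j * ((i + 1).choose j : ℤ)) (i + 1)] at h
    simp only [pow_zero, one_mul, Nat.choose_zero_right, Nat.cast_one] at h
    have h2 : ∑ m ∈ range (i + 1), (-1 : ℤ) ^ (m + 1) * ((i + 1).choose (m + 1) : ℤ)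
        = -∑ m ∈ range (i + 1), (-1 : ℤ) ^ m * ((i + 1).choose (m + 1) : ℤ) := by
      rw [← Finset.sum_neg_distrib]
      exact Finset.sum_congr rfl fun m _ => by ring
    rw [h2] at h
    omega
  have keyR : ∑ m ∈ range (i + 1), (-1 : ℝ) ^ m * (((i + 1).choose (m + 1) : ℕ) : ℝ) = 1 := by
    exact_mod_cast key
  calc ∑ m ∈ range (i + 1), (-1 : ℝ) ^ m * (i.choose m : ℝ) / (m + 1)
      = ∑ m ∈ range (i + 1), ((-1 : ℝ) ^ m * (((i + 1).choose (m + 1) : ℕ) : ℝ)) / (i + 1) := by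
        refine Finset.sum_congr rfl fun m _ => ?_
        have hnat := Nat.add_one_mul_choose_eq i m
        have hr : ((i : ℝ) + 1) * (i.choose m : ℝ) = ((i + 1).choose (m + 1) : ℝ) * ((m : ℝ) + 1) := by
          exact_mod_cast hnat
        have hm1 : ((m : ℝ) + 1) ≠ 0 := by positivity
        have hi1 : ((i : ℝ) + 1) ≠ 0 := by positivity
        field_simp
        linear_combination hr
    _ = (∑ m ∈ range (i + 1), (-1 : ℝ) ^ m * (((i + 1).choose (m + 1) : ℕ) : ℝ)) / (i + 1) := by
        rw [Finset.sum_div]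
    _ = 1 / (i + 1) := by rw [keyR]


/-- The Taylor-type function `φ_k(x) = ∑_{i=0}^{k} f⁽ⁱ⁺¹⁾(x)/(i+1)! · (h x)^i`, built
from a step function `h` of order `k` at `z`, satisfies the model-function conditions of
order `k` for `f` at `z`. -/
theorem taylor_type_is_model_function (z : ℝ) (k : ℕ) (hk : 1 ≤ k) (f h : ℝ → ℝ)
    (hf : ContDiffAt ℝ (⊤ : ℕ∞) f z) (hsmooth : ContDiffAt ℝ (⊤ : ℕ∞) h z)
    (h0 : h z = 0) (h1 : deriv h z = -1)
    (hhi : ∀ i : ℕ, 2 ≤ i → i ≤ k → iteratedDeriv i h z = 0) :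
    ∀ i : ℕ, i ≤ k →
      iteratedDeriv i
        (fun x => ∑ m ∈ Finset.range (k + 1),
          iteratedDeriv (m + 1) f x / (Nat.factorial (m + 1) : ℝ) * (h x) ^ m) z
      = iteratedDeriv (i + 1) f z / (i + 1 : ℝ) := by
  intro i hik
  obtain ⟨F, hF, hfF⟩ := my_extend hf (2 * k + 2)
  obtain ⟨H, hH, hhH⟩ := my_extend hsmooth (2 * k + 2)
  -- transfer hypotheses to H
  have hH0 : H z = 0 := by rw [← hhH.eq_of_nhds]; exact h0
  have hH1 : deriv H z = -1 := by rw [← hhH.deriv_eq]; exact h1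
  have hHi : ∀ j : ℕ, 2 ≤ j → j ≤ k → iteratedDeriv j H z = 0 := fun j h2 hjk => by
    rw [← hhH.iteratedDeriv_eq]; exact hhi j h2 hjk
  -- replace the function by its version built from F, H
  have hΦ : (fun x => ∑ m ∈ Finset.range (k + 1),
        iteratedDeriv (m + 1) f x / (Nat.factorial (m + 1) : ℝ) * (h x) ^ m)
      =ᶠ[nhds z] (fun x => ∑ m ∈ Finset.range (k + 1),
        iteratedDeriv (m + 1) F x / (Nat.factorial (m + 1) : ℝ) * (H x) ^ m) := by
    filter_upwards [hfF.eventuallyEq_nhds, hhH] with x hx hX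
    refine Finset.sum_congr rfl fun m _ => ?_
    rw [hx.iteratedDeriv_eq (m + 1), hX]
  rw [hΦ.iteratedDeriv_eq i, hfF.iteratedDeriv_eq (i + 1)]
  -- now the global computation
  have hterm : ∀ m ∈ Finset.range (k + 1), ContDiff ℝ (i : WithTop ℕ∞)
      (fun x => iteratedDeriv (m + 1) F x / (Nat.factorial (m + 1) : ℝ) * (H x) ^ m) :=
    fun m hm => ((my_smooth_iter (N := i) (m + 1)
      (my_of_le hF (by have := Finset.mem_range.mp hm; omega))).div_const _).mul
      ((my_of_le hH (by omega)).pow m)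
  rw [my_sum (Finset.range (k + 1)) _ (fun m hm => hterm m hm) z]
  set D : ℝ := iteratedDeriv (i + 1) F z with hD
  have hu : ∀ m j : ℕ, m ≤ k → j ≤ k → iteratedDeriv j
      (fun x => iteratedDeriv (m + 1) F x / (Nat.factorial (m + 1) : ℝ)) z
      = iteratedDeriv (j + (m + 1)) F z / (Nat.factorial (m + 1) : ℝ) := by
    intro m j hmk hjk
    have e : (fun x => iteratedDeriv (m + 1) F x / (Nat.factorial (m + 1) : ℝ))
        = fun x => (1 / (Nat.factorial (m + 1) : ℝ)) * iteratedDeriv (m + 1) F x :=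
      funext fun x => by ring
    rw [e, my_const_mul (my_smooth_iter (N := j) (m + 1) (my_of_le hF (by omega))), my_comp]
    ring
  have hmain : ∀ m ∈ Finset.range (k + 1),
      iteratedDeriv i (fun x => iteratedDeriv (m + 1) F x / (Nat.factorial (m + 1) : ℝ)
        * (H x) ^ m) z
      = if m ≤ i then (i.choose m : ℝ) * (-1) ^ m * D / (m + 1) else 0 := by
    intro m hmr
    have hmk := Finset.mem_range.mp hmr
    rw [my_leibniz ((my_smooth_iter (N := i) (m + 1) (my_of_le hF (by omega))).div_const _)
      ((my_of_le hH (by omega)).pow m) z]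
    by_cases hmi : m ≤ i
    · rw [if_pos hmi]
      rw [Finset.sum_eq_single (i - m)]
      · rw [hu m (i - m) (by omega) (by omega), my_pow k (my_of_le hH (by omega)) hH0 hH1 hHi m (i - (i - m)) (by omega),
          if_pos (by omega), show i - m + (m + 1) = i + 1 by omega,
          Nat.choose_symm hmi, ← hD]
        have hfac : (Nat.factorial (m + 1) : ℝ) = ((m : ℝ) + 1) * (Nat.factorial m : ℝ) := by
          rw [Nat.factorial_succ]; push_cast; ring
        have hm0 : (Nat.factorial m : ℝ) ≠ 0 := by
          exact_mod_cast Nat.factorial_ne_zero m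
        have hm1 : ((m : ℝ) + 1) ≠ 0 := by positivity
        rw [hfac]
        field_simp
      · intro j hj hjne
        rw [my_pow k (my_of_le hH (by omega)) hH0 hH1 hHi m (i - j) (by omega),
          if_neg (by have := Finset.mem_range.mp hj; omega)]
        ring
      · intro hnot
        exact absurd (Finset.mem_range.mpr (by omega)) hnot
    · rw [if_neg hmi]
      refine Finset.sum_eq_zero fun j hj => ?_
      rw [my_pow k (my_of_le hH (by omega)) hH0 hH1 hHi m (i - j) (by omega), if_neg (by omega)]
      ring
  rw [Finset.sum_congr rfl hmain]
  have hsub : ∑ m ∈ Finset.range (k + 1),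
        (if m ≤ i then (i.choose m : ℝ) * (-1) ^ m * D / (m + 1) else 0)
      = ∑ m ∈ Finset.range (i + 1), (i.choose m : ℝ) * (-1) ^ m * D / (m + 1) := by
    have hvan : ∀ m ∈ Finset.range (k + 1), m ∉ Finset.range (i + 1) →
        (if m ≤ i then (i.choose m : ℝ) * (-1) ^ m * D / (m + 1) else 0) = 0 := by
      intro m _ hm
      rw [if_neg]
      intro hle
      exact hm (Finset.mem_range.mpr (by omega))
    rw [← Finset.sum_subset (Finset.range_subset_range.mpr (by omega)) hvan]
    exact Finset.sum_congr rfl fun m hm =>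
      if_pos (by have := Finset.mem_range.mp hm; omega)
  rw [hsub]
  have : ∑ m ∈ Finset.range (i + 1), (i.choose m : ℝ) * (-1) ^ m * D / (m + 1)
      = D * ∑ m ∈ Finset.range (i + 1), (-1 : ℝ) ^ m * (i.choose m : ℝ) / (m + 1) := by
    rw [Finset.mul_sum]
    exact Finset.sum_congr rfl fun m _ => by ring
  rw [this, my_altsum i]
  ring
end

section
/- Let z ∈ ℝ, let k ≥ 1 be an integer, let f : ℝ → ℝ be C^∞ on a neighborhood of z with f^(i)(z) ≠ 0 for every i = 1, 2, …, k+1, let h be a step function of order k at z, and let a₀, a₁, …, a_k be real numbers. If the function φ_k(x) = ∑_{m=0}^{k} a_m · f'(x + m·h(x)) satisfies the model-function conditions of order k for f at z (i.e., φ_k^(i)(z) = f^(i+1)(z)/(i+1) for every i = 0, 1, …, k), then the coefficients satisfy ∑_{m=0}^{k} a_m · (1 − m)^i = 1/(i+1) for every i = 0, 1, …, k; in particular ∑_{m=0}^{k} a_m = 1, and the coefficient vector is the unique solution of this linear system. -/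
open Filter Topology

private lemma bcu_deriv_smooth {f : ℝ → ℝ} {z : ℝ} (hf : ContDiffAt ℝ (⊤ : ℕ∞) f z) :
    ContDiffAt ℝ (⊤ : ℕ∞) (deriv f) z := by
  have h : ContDiffAt ℝ (⊤ : ℕ∞) (fderiv ℝ f) z := hf.fderiv_right (by simp)
  have h2 : ContDiffAt ℝ (⊤ : ℕ∞) (fun x => fderiv ℝ f x (1 : ℝ)) z := h.clm_apply contDiffAt_const
  have : deriv f = fun x => fderiv ℝ f x (1 : ℝ) := funext fun x => (fderiv_apply_one_eq_deriv).symm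
  rw [this]; exact h2

private lemma bcu_evdiff {f : ℝ → ℝ} {z : ℝ} (hf : ContDiffAt ℝ (⊤ : ℕ∞) f z) :
    ∀ᶠ y in 𝓝 z, DifferentiableAt ℝ f y := by
  have h1 : ContDiffAt ℝ 1 f z := hf.of_le (by simp)
  filter_upwards [h1.eventually (by simp)] with y hy
  exact hy.differentiableAt one_ne_zero

private lemma bcu_add {u v : ℝ → ℝ} {z : ℝ} (n : ℕ)
    (hu : ContDiffAt ℝ (⊤ : ℕ∞) u z) (hv : ContDiffAt ℝ (⊤ : ℕ∞) v z) :
    iteratedDeriv n (fun x => u x + v x) z = iteratedDeriv n u z + iteratedDeriv n v z := by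
  induction n generalizing u v z with
  | zero => simp
  | succ n ih =>
    rw [iteratedDeriv_succ', iteratedDeriv_succ', iteratedDeriv_succ']
    have heq : deriv (fun x => u x + v x) =ᶠ[𝓝 z] fun x => deriv u x + deriv v x := by
      filter_upwards [bcu_evdiff hu, bcu_evdiff hv] with y h1 h2
      exact deriv_add h1 h2
    rw [heq.iteratedDeriv_eq n]
    exact ih (bcu_deriv_smooth hu) (bcu_deriv_smooth hv)

private lemma bcu_const_mul {u : ℝ → ℝ} {z : ℝ} (c : ℝ) (n : ℕ)
    (hu : ContDiffAt ℝ (⊤ : ℕ∞) u z) :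
    iteratedDeriv n (fun x => c * u x) z = c * iteratedDeriv n u z := by
  induction n generalizing u z with
  | zero => simp
  | succ n ih =>
    rw [iteratedDeriv_succ', iteratedDeriv_succ']
    have heq : deriv (fun x => c * u x) =ᶠ[𝓝 z] fun x => c * deriv u x := by
      filter_upwards [bcu_evdiff hu] with y h1
      exact deriv_const_mul c h1
    rw [heq.iteratedDeriv_eq n]
    exact ih (bcu_deriv_smooth hu)

private lemma bcu_shift {r : ℝ → ℝ} (c : ℝ) (n : ℕ) (z : ℝ) (hn : 1 ≤ n) :
    iteratedDeriv n (fun x => r x - c) z = iteratedDeriv n r z := by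
  obtain ⟨m, rfl⟩ := Nat.exists_eq_add_of_le hn
  rw [add_comm]
  rw [iteratedDeriv_succ', iteratedDeriv_succ']
  congr 1
  funext y
  exact deriv_sub_const c

private lemma bcu_mul_vanish {z : ℝ} (n : ℕ) :
    ∀ (u r : ℝ → ℝ), ContDiffAt ℝ (⊤ : ℕ∞) u z → ContDiffAt ℝ (⊤ : ℕ∞) r z →
    (∀ j ≤ n, iteratedDeriv j r z = 0) →
    ∀ j ≤ n, iteratedDeriv j (fun x => u x * r x) z = 0 := by
  induction n with
  | zero =>
    intro u r _ _ hr j hj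
    interval_cases j
    simp only [iteratedDeriv_zero]
    have := hr 0 le_rfl
    simp only [iteratedDeriv_zero] at this
    simp [this]
  | succ n ih =>
    intro u r hu hr hrv j hj
    rcases Nat.eq_zero_or_pos j with rfl | hjpos
    · have := hrv 0 (Nat.zero_le _)
      simp only [iteratedDeriv_zero] at this ⊢
      simp [this]
    obtain ⟨j, rfl⟩ := Nat.exists_eq_add_of_le hjpos
    rw [add_comm] at hj ⊢
    rw [iteratedDeriv_succ']
    have heq : deriv (fun x => u x * r x) =ᶠ[𝓝 z]
        fun x => deriv u x * r x + u x * deriv r x := by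
      filter_upwards [bcu_evdiff hu, bcu_evdiff hr] with y h1 h2
      exact deriv_mul h1 h2
    rw [heq.iteratedDeriv_eq j]
    have hu' := bcu_deriv_smooth hu
    have hr' := bcu_deriv_smooth hr
    rw [bcu_add j (hu'.mul hr) (hu.mul hr')]
    have e1 : iteratedDeriv j (fun x => deriv u x * r x) z = 0 :=
      ih (deriv u) r hu' hr (fun i hi => hrv i (hi.trans (Nat.le_succ n))) j
        (Nat.le_of_succ_le_succ hj)
    have e2 : iteratedDeriv j (fun x => u x * deriv r x) z = 0 := by
      refine ih u (deriv r) hu hr' ?_ j (Nat.le_of_succ_le_succ hj)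
      intro i hi
      rw [← iteratedDeriv_succ']
      exact hrv (i + 1) (Nat.succ_le_succ hi)
    rw [e1, e2, add_zero]

private lemma bcu_comp {z w : ℝ} {g : ℝ → ℝ} (hg : ContDiffAt ℝ (⊤ : ℕ∞) g z) (hgz : g z = w) :
    ∀ (n : ℕ) (F : ℝ → ℝ), ContDiffAt ℝ (⊤ : ℕ∞) F w →
    (∀ j, 2 ≤ j → j ≤ n → iteratedDeriv j g z = 0) →
    iteratedDeriv n (fun x => F (g x)) z = iteratedDeriv n F w * (deriv g z) ^ n := by
  intro n
  induction n with
  | zero => intro F _ _; simp [hgz]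
  | succ n ih =>
    intro F hF hgv
    set c := deriv g z with hc
    have hFg : ∀ᶠ y in 𝓝 z, DifferentiableAt ℝ F (g y) := by
      have : Filter.Tendsto g (𝓝 z) (𝓝 w) := hgz ▸ hg.continuousAt.tendsto
      exact this.eventually (bcu_evdiff hF)
    have heq : deriv (fun x => F (g x)) =ᶠ[𝓝 z]
        fun x => c * deriv F (g x) + deriv F (g x) * (deriv g x - c) := by
      filter_upwards [bcu_evdiff hg, hFg] with y h1 h2
      have : deriv (fun x => F (g x)) y = deriv F (g y) * deriv g y :=
        (h2.hasDerivAt.comp y h1.hasDerivAt).deriv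
      rw [this]; ring
    rw [iteratedDeriv_succ', heq.iteratedDeriv_eq n]
    have hdFg : ContDiffAt ℝ (⊤ : ℕ∞) (fun x => deriv F (g x)) z := by
      have := (bcu_deriv_smooth hF)
      exact (hgz ▸ this : ContDiffAt ℝ (⊤ : ℕ∞) (deriv F) (g z)).comp z hg
    have hA1 : ContDiffAt ℝ (⊤ : ℕ∞) (fun x => c * deriv F (g x)) z := contDiffAt_const.mul hdFg
    have hA2 : ContDiffAt ℝ (⊤ : ℕ∞) (fun x => deriv F (g x) * (deriv g x - c)) z :=
      hdFg.mul ((bcu_deriv_smooth hg).sub contDiffAt_const)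
    rw [bcu_add n hA1 hA2, bcu_const_mul c n hdFg]
    have e1 : iteratedDeriv n (fun x => deriv F (g x)) z
        = iteratedDeriv n (deriv F) w * c ^ n :=
      ih (deriv F) (bcu_deriv_smooth hF) (fun j h2 hn => hgv j h2 (hn.trans (Nat.le_succ n)))
    have e2 : iteratedDeriv n (fun x => deriv F (g x) * (deriv g x - c)) z = 0 := by
      refine bcu_mul_vanish n _ _ hdFg ((bcu_deriv_smooth hg).sub contDiffAt_const) ?_ n le_rfl
      intro j hj
      rcases Nat.eq_zero_or_pos j with rfl | hjpos
      · simp [hc]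
      rw [bcu_shift c j z hjpos, ← iteratedDeriv_succ']
      exact hgv (j + 1) (Nat.succ_le_succ hjpos) (Nat.succ_le_succ hj)
    rw [e1, e2, add_zero, iteratedDeriv_succ']
    ring

private lemma bcu_const_iter (z : ℝ) (n : ℕ) (hn : 1 ≤ n) (c : ℝ) :
    iteratedDeriv n (fun _ : ℝ => c) z = 0 := by
  induction n generalizing c with
  | zero => omega
  | succ n ih =>
    rw [iteratedDeriv_succ']
    have : deriv (fun _ : ℝ => c) = fun _ : ℝ => (0 : ℝ) := funext fun x => deriv_const x c
    rw [this]
    rcases Nat.eq_zero_or_pos n with rfl | hpos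
    · simp
    · exact ih hpos 0

private lemma bcu_id_iter (z : ℝ) (n : ℕ) (hn : 2 ≤ n) :
    iteratedDeriv n (fun x : ℝ => x) z = 0 := by
  obtain ⟨m, rfl⟩ := Nat.exists_eq_add_of_le hn
  rw [add_comm, iteratedDeriv_succ']
  have : deriv (fun x : ℝ => x) = fun _ : ℝ => (1 : ℝ) := funext fun x => deriv_id x
  rw [this]
  exact bcu_const_iter z (m + 1) (Nat.succ_le_succ (Nat.zero_le m)) 1

private lemma bcu_sum {z : ℝ} {ι : Type*} (s : Finset ι) (F : ι → ℝ → ℝ)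
    (hF : ∀ m ∈ s, ContDiffAt ℝ (⊤ : ℕ∞) (F m) z) (n : ℕ) :
    iteratedDeriv n (fun x => ∑ m ∈ s, F m x) z = ∑ m ∈ s, iteratedDeriv n (F m) z := by
  induction s using Finset.cons_induction with
  | empty => simpa using (by rcases Nat.eq_zero_or_pos n with rfl | h; · simp
                             · exact bcu_const_iter z n h 0 : iteratedDeriv n (fun _ : ℝ => (0:ℝ)) z = 0)
  | cons i s his ih =>
    simp only [Finset.sum_cons]
    rw [bcu_add n (hF i (Finset.mem_cons_self i s))
      (ContDiffAt.sum fun m hm => hF m (Finset.mem_cons_of_mem hm)),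
      ih (fun m hm => hF m (Finset.mem_cons_of_mem hm))]



/-- Conversely, if the barycentric-type function
`φ_k(x) = ∑_{m=0}^{k} a_m · f'(x + m·h(x))` satisfies the model-function conditions of
order `k` for `f` at `z` (where `h` is a step function of order `k` at `z` and the
derivatives `f⁽ⁱ⁾(z)` for `i = 1, …, k+1` are nonzero), then the coefficients solve the
linear system `∑_{m=0}^{k} a_m (1 - m)^i = 1/(i+1)` for `i = 0, …, k`; in particular
`∑ a_m = 1`, and they are the unique solution of this system. -/
theorem barycentric_coefficients_unique (z : ℝ) (k : ℕ) (hk : 1 ≤ k) (f h : ℝ → ℝ)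
    (hf : ContDiffAt ℝ (⊤ : ℕ∞) f z)
    (hfderiv : ∀ i : ℕ, 1 ≤ i → i ≤ k + 1 → iteratedDeriv i f z ≠ 0)
    (hsmooth : ContDiffAt ℝ (⊤ : ℕ∞) h z)
    (h0 : h z = 0) (h1 : deriv h z = -1)
    (hhi : ∀ i : ℕ, 2 ≤ i → i ≤ k → iteratedDeriv i h z = 0)
    (a : ℕ → ℝ)
    (hmodel : ∀ i : ℕ, i ≤ k →
      iteratedDeriv i
        (fun x => ∑ m ∈ Finset.range (k + 1), a m * deriv f (x + (m : ℝ) * h x)) z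
      = iteratedDeriv (i + 1) f z / (i + 1 : ℝ)) :
    (∀ i : ℕ, i ≤ k →
      ∑ m ∈ Finset.range (k + 1), a m * (1 - (m : ℝ)) ^ i = 1 / (i + 1 : ℝ)) ∧
    (∑ m ∈ Finset.range (k + 1), a m = 1) ∧
    (∀ b : ℕ → ℝ,
      (∀ i : ℕ, i ≤ k →
        ∑ m ∈ Finset.range (k + 1), b m * (1 - (m : ℝ)) ^ i = 1 / (i + 1 : ℝ)) →
      ∀ m : ℕ, m ≤ k → b m = a m) := by
  have hdf := bcu_deriv_smooth hf
  have hgsm : ∀ m : ℕ, ContDiffAt ℝ (⊤ : ℕ∞) (fun x => x + (m : ℝ) * h x) z :=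
    fun m => contDiffAt_id.add (contDiffAt_const.mul hsmooth)
  have hgz : ∀ m : ℕ, (fun x => x + (m : ℝ) * h x) z = z := fun m => by simp [h0]
  have hpt : ∀ m : ℕ, z + (m : ℝ) * h z = z := fun m => by rw [h0]; ring
  have hcsm : ∀ m : ℕ, ContDiffAt ℝ (⊤ : ℕ∞) (fun x => deriv f (x + (m : ℝ) * h x)) z := by
    intro m
    exact ContDiffAt.comp z (by rw [hpt m]; exact hdf) (hgsm m)
  have key : ∀ i : ℕ, i ≤ k →
      ∑ m ∈ Finset.range (k + 1), a m * (1 - (m : ℝ)) ^ i = 1 / (i + 1 : ℝ) := by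
    intro i hik
    have hgd : ∀ m : ℕ, deriv (fun x => x + (m : ℝ) * h x) z = 1 - (m : ℝ) := by
      intro m
      have h1' : HasDerivAt h (deriv h z) z := (hsmooth.differentiableAt (by simp)).hasDerivAt
      have hd : HasDerivAt (fun x => x + (m : ℝ) * h x) (1 + (m : ℝ) * deriv h z) z := by
        simpa using (hasDerivAt_id' z).fun_add (h1'.const_mul (m : ℝ))
      rw [hd.deriv, h1]; ring
    have hgv : ∀ m : ℕ, ∀ j, 2 ≤ j → j ≤ i →
        iteratedDeriv j (fun x => x + (m : ℝ) * h x) z = 0 := by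
      intro m j hj2 hji
      have e : iteratedDeriv j (fun x => x + (m : ℝ) * h x) z
          = iteratedDeriv j (fun x => x) z + iteratedDeriv j (fun x => (m : ℝ) * h x) z :=
        bcu_add j contDiffAt_id (contDiffAt_const.mul hsmooth)
      rw [e, bcu_id_iter z j hj2, bcu_const_mul (m : ℝ) j hsmooth,
        hhi j hj2 (hji.trans hik), mul_zero, add_zero]
    have hcomp : ∀ m : ℕ, iteratedDeriv i (fun x => deriv f (x + (m : ℝ) * h x)) z
        = iteratedDeriv (i + 1) f z * (1 - (m : ℝ)) ^ i := by
      intro m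
      rw [bcu_comp (hgsm m) (hgz m) i (deriv f) hdf (hgv m),
        hgd m, iteratedDeriv_succ']
    have hφ : iteratedDeriv i
        (fun x => ∑ m ∈ Finset.range (k + 1), a m * deriv f (x + (m : ℝ) * h x)) z
        = iteratedDeriv (i + 1) f z
          * ∑ m ∈ Finset.range (k + 1), a m * (1 - (m : ℝ)) ^ i := by
      rw [bcu_sum (Finset.range (k + 1)) (fun m x => a m * deriv f (x + (m : ℝ) * h x))
        (fun m _ => contDiffAt_const.mul (hcsm m)) i, Finset.mul_sum]
      refine Finset.sum_congr rfl fun m _ => ?_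
      rw [bcu_const_mul (a m) i (hcsm m), hcomp m]; ring
    have hD : iteratedDeriv (i + 1) f z ≠ 0 :=
      hfderiv (i + 1) (Nat.succ_le_succ (Nat.zero_le i)) (Nat.succ_le_succ hik)
    have hmod := hmodel i hik
    rw [hφ] at hmod
    refine mul_left_cancel₀ hD ?_
    rw [hmod]; ring
  refine ⟨key, ?_, ?_⟩
  · have h00 := key 0 (Nat.zero_le k); simpa using h00
  · intro b hb m hm
    classical
    set v : Fin (k + 1) → ℝ := fun m => 1 - ((m : ℕ) : ℝ) with hv
    set M := Matrix.vandermonde v with hM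
    have hdet : M.det ≠ 0 := by
      rw [hM, Matrix.det_vandermonde]
      refine Finset.prod_ne_zero_iff.mpr fun i _ => Finset.prod_ne_zero_iff.mpr fun j hj => ?_
      have hij : (i : ℕ) < (j : ℕ) := Fin.lt_iff_val_lt_val.mp (Finset.mem_Ioi.mp hj)
      have hc : ((i : ℕ) : ℝ) < ((j : ℕ) : ℝ) := by exact_mod_cast hij
      simp only [hv]
      intro hEq
      have : ((i : ℕ) : ℝ) = ((j : ℕ) : ℝ) := by linarith [sub_eq_zero.mp hEq]
      linarith
    set d : Fin (k + 1) → ℝ := fun m => b (m : ℕ) - a (m : ℕ) with hd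
    have hsum : ∀ (c : ℕ → ℝ) (i : Fin (k + 1)),
        ∑ m : Fin (k + 1), c (m : ℕ) * v m ^ (i : ℕ)
          = ∑ m ∈ Finset.range (k + 1), c m * (1 - (m : ℝ)) ^ (i : ℕ) := by
      intro c i
      rw [← Fin.sum_univ_eq_sum_range (fun m => c m * (1 - (m : ℝ)) ^ (i : ℕ))]
    have hvec : Matrix.vecMul d M = 0 := by
      funext i
      have hik : (i : ℕ) ≤ k := Nat.lt_succ_iff.mp i.isLt
      have hb' := hb (i : ℕ) hik
      have ha' := key (i : ℕ) hik
      simp only [hM, Matrix.vecMul, dotProduct, Matrix.vandermonde, hd, Pi.zero_apply,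
        Matrix.of_apply]
      have : ∀ m : Fin (k + 1), (b (m : ℕ) - a (m : ℕ)) * v m ^ (i : ℕ)
          = b (m : ℕ) * v m ^ (i : ℕ) - a (m : ℕ) * v m ^ (i : ℕ) := fun m => by ring
      rw [Finset.sum_congr rfl fun m _ => this m, Finset.sum_sub_distrib,
        hsum b i, hsum a i, hb', ha', sub_self]
    have hdz : d = 0 := by
      have h2 := congrArg (fun w => Matrix.vecMul w M⁻¹) hvec
      simpa [Matrix.vecMul_vecMul, Matrix.mul_nonsing_inv M (Ne.isUnit hdet),
        Matrix.vecMul_one, Matrix.zero_vecMul] using h2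
    have := congrFun hdz ⟨m, Nat.lt_succ_of_le hm⟩
    simpa [hd, sub_eq_zero] using this
end
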